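/- Define constants L̄ = (N-1) max over t < T, k < N, ω of (1 - P_t^k(ω)) P_t^k(ω) and L = (1/2)(N-1)^{-1} min over t < T, k ≤ N, ω of P_t^k(ω). Then for every t and every F_t-measurable Z_t ∈ R^{K×N}, L · E[‖Z_t Ĩ‖^2] ≤ E[|Z_t M_{t+1}|^2] ≤ L̄ · E[‖Z_t Ĩ‖^2], where Ĩ = (I_{(N-1)×(N-1)}, -1_{N-1})^*. -/

import Mathlib

/-!
Conditioning on `F_t` reduces everything to one atom, on which `M_{t+1} = e_k - q` with
probability `q_k = P_t^k`. Row by row, `E[|Z M|² | F_t]` is therefore the variance of the entries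
`z_k` of the row under `q`, while `‖Z Ĩ‖²` sums the squares of `z_j - z_N`.
For the lower bound, `q_k ≥ min P` makes the variance dominate `min P · Σ_k (z_k - mean)²`, and
`(z_j - z_N)² ≤ 2 (z_j - mean)² + 2 (z_N - mean)²`.
For the upper bound, shift the row so that `z_N = 0`: the variance becomes the quadratic form of
`diag q - q qᵀ` on the first `N - 1` coordinates, whose entries are at most `max q (1 - q)` in
absolute value (off the diagonal `q_j q_l ≤ q_j (1 - q_j)` since `q_j + q_l ≤ 1`), and
Cauchy–Schwarz contributes the factor `N - 1`.
-/

open Finset Matrix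

section Setup

variable {Ω : Type*} [Fintype Ω] [DecidableEq Ω] {N : ℕ}

/-- A probability on a finite sample space with everywhere-positive weights. -/
structure FinProb (Ω : Type*) [Fintype Ω] where
  p : Ω → ℝ
  pos : ∀ ω, 0 < p ω
  sum_one : ∑ ω, p ω = 1

/-- `ω` and `ω'` share the same `W`-path up to time `t` (the atoms of `F_t`). -/
def samePath (W : ℕ → Ω → Fin N) (t : ℕ) (ω ω' : Ω) : Prop :=
  ∀ s ∈ Finset.range (t + 1), W s ω = W s ω'

instance (W : ℕ → Ω → Fin N) (t : ℕ) (ω ω' : Ω) : Decidable (samePath W t ω ω') := by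
  unfold samePath; infer_instance

/-- `F_t`-measurability: `f` is constant on the atoms of `F_t`. -/
def measF (W : ℕ → Ω → Fin N) (t : ℕ) {α : Type*} (f : Ω → α) : Prop :=
  ∀ ω ω', samePath W t ω ω' → f ω = f ω'

/-- Conditional expectation given `F_t`. -/
noncomputable def cexp (P : FinProb Ω) (W : ℕ → Ω → Fin N) (t : ℕ)
    {E : Type*} [AddCommGroup E] [Module ℝ E] (Y : Ω → E) (ω : Ω) : E :=
  (∑ ω' ∈ univ.filter (fun ω' => samePath W t ω ω'), P.p ω')⁻¹ •
    ∑ ω' ∈ univ.filter (fun ω' => samePath W t ω ω'), P.p ω' • Y ω'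

/-- The basis-vector valued process `W_t ∈ {e_1,…,e_N} ⊆ ℝ^N`. -/
def wvec (W : ℕ → Ω → Fin N) (t : ℕ) (ω : Ω) : Fin N → ℝ :=
  fun j => if W t ω = j then 1 else 0

/-- `M_{t+1} = W_{t+1} - E[W_{t+1} | F_t]` (indexed so that `Mdiff P W t` is `M_{t+1}`). -/
noncomputable def Mdiff (P : FinProb Ω) (W : ℕ → Ω → Fin N) (t : ℕ) (ω : Ω) : Fin N → ℝ :=
  wvec W (t + 1) ω - cexp P W t (wvec W (t + 1)) ω

/-- One-step conditional transition probability `P_t^k = e_k^* E[W_{t+1}|F_t]`. -/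
noncomputable def Pt (P : FinProb Ω) (W : ℕ → Ω → Fin N) (t : ℕ) (k : Fin N) (ω : Ω) : ℝ :=
  cexp P W t (fun ω' => wvec W (t + 1) ω' k) ω

/-- The `N × (N-1)` matrix `Ĩ` whose top block is the identity and last row is all `-1`. -/
def Itil (n : ℕ) : Matrix (Fin (n + 1)) (Fin n) ℝ :=
  fun i j => if (i : ℕ) = (j : ℕ) then 1 else if (i : ℕ) = n then -1 else 0

end Setup

section ConditionalExpectation

variable {Ω : Type*} {N : ℕ} {W : ℕ → Ω → Fin N} {t : ℕ}

lemma samePath_refl (ω : Ω) : samePath W t ω ω := fun _ _ => rfl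

lemma samePath.symm {ω ω' : Ω} (h : samePath W t ω ω') : samePath W t ω' ω :=
  fun s hs => (h s hs).symm

lemma samePath.trans {ω ω' ω'' : Ω} (h : samePath W t ω ω') (h' : samePath W t ω' ω'') :
    samePath W t ω ω'' :=
  fun s hs => (h s hs).trans (h' s hs)

variable [Fintype Ω] (P : FinProb Ω)

variable (W t) in
def atom (ω : Ω) : Finset Ω := univ.filter (samePath W t ω)

lemma mem_atom {ω ω' : Ω} : ω' ∈ atom W t ω ↔ samePath W t ω ω' := by
  simp [atom]

lemma atom_eq_of_samePath {ω ω' : Ω} (h : samePath W t ω ω') : atom W t ω = atom W t ω' := by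
  ext ω''
  simp only [mem_atom]
  exact ⟨h.symm.trans, h.trans⟩

lemma atom_weight_pos (ω : Ω) : 0 < ∑ ω' ∈ atom W t ω, P.p ω' :=
  sum_pos (fun ω' _ => P.pos ω') ⟨ω, mem_atom.2 (samePath_refl ω)⟩

lemma cexp_def {E : Type*} [AddCommGroup E] [Module ℝ E] (Y : Ω → E) (ω : Ω) :
    cexp P W t Y ω =
      (∑ ω' ∈ atom W t ω, P.p ω')⁻¹ • ∑ ω' ∈ atom W t ω, P.p ω' • Y ω' :=
  rfl

lemma cexp_congr {E : Type*} [AddCommGroup E] [Module ℝ E] {Y Y' : Ω → E} {ω : Ω}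
    (h : ∀ ω', samePath W t ω ω' → Y ω' = Y' ω') : cexp P W t Y ω = cexp P W t Y' ω := by
  simp only [cexp_def]
  congr 1
  exact sum_congr rfl fun ω' hω' => by rw [h ω' (mem_atom.1 hω')]

lemma cexp_eq_of_samePath {E : Type*} [AddCommGroup E] [Module ℝ E] (Y : Ω → E) {ω ω' : Ω}
    (h : samePath W t ω ω') : cexp P W t Y ω = cexp P W t Y ω' := by
  simp only [cexp_def, atom_eq_of_samePath h]

lemma cexp_const {E : Type*} [AddCommGroup E] [Module ℝ E] (y : E) (ω : Ω) :
    cexp P W t (fun _ => y) ω = y := by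
  rw [cexp_def, ← sum_smul, inv_smul_smul₀ (atom_weight_pos P ω).ne']

lemma cexp_apply {ι : Type*} (Y : Ω → ι → ℝ) (ω : Ω) (i : ι) :
    cexp P W t Y ω i = cexp P W t (fun ω' => Y ω' i) ω := by
  simp [cexp_def, Finset.sum_apply]

lemma cexp_nonneg {f : Ω → ℝ} (hf : ∀ ω, 0 ≤ f ω) (ω : Ω) : 0 ≤ cexp P W t f ω :=
  smul_nonneg (inv_nonneg.2 (atom_weight_pos P ω).le)
    (sum_nonneg fun ω' _ => mul_nonneg (P.pos ω').le (hf ω'))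

lemma sum_mul_cexp (f : Ω → ℝ) : ∑ ω, P.p ω * cexp P W t f ω = ∑ ω, P.p ω * f ω := by
  set w : Ω → ℝ := fun ω => ∑ ω' ∈ atom W t ω, P.p ω'
  have hw : ∀ ω', ∑ ω ∈ atom W t ω', P.p ω * (w ω)⁻¹ = 1 := fun ω' => by
    have hconst : ∀ ω ∈ atom W t ω', P.p ω * (w ω)⁻¹ = P.p ω * (w ω')⁻¹ :=
      fun ω hω => by
      simp only [w, atom_eq_of_samePath (mem_atom.1 hω).symm]
    rw [sum_congr rfl hconst, ← sum_mul, mul_inv_cancel₀ (atom_weight_pos P ω').ne']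
  calc ∑ ω, P.p ω * cexp P W t f ω
      = ∑ ω, ∑ ω' ∈ atom W t ω, P.p ω * (w ω)⁻¹ * (P.p ω' * f ω') := by
        simp only [w, cexp_def, smul_eq_mul, mul_sum, mul_assoc]
    _ = ∑ ω', ∑ ω ∈ atom W t ω', P.p ω * (w ω)⁻¹ * (P.p ω' * f ω') :=
        sum_comm' fun ω ω' => by
          simp only [mem_univ, true_and, and_true, mem_atom]
          exact ⟨samePath.symm, samePath.symm⟩
    _ = ∑ ω, P.p ω * f ω := by simp only [← sum_mul, hw, one_mul]

lemma Pt_nonneg (k : Fin N) (ω : Ω) : 0 ≤ Pt P W t k ω :=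
  cexp_nonneg P (fun ω' => by unfold wvec; split_ifs <;> norm_num) ω

lemma cexp_comp_succ (g : Fin N → ℝ) (ω : Ω) :
    cexp P W t (fun ω' => g (W (t + 1) ω')) ω = ∑ k, Pt P W t k ω * g k := by
  simp only [Pt, cexp_def, wvec, smul_eq_mul, mul_ite, mul_one, mul_zero, sum_mul, mul_assoc,
    ← mul_sum]
  rw [sum_comm]
  congr 1
  exact sum_congr rfl fun ω' _ => by simp [ite_mul]

lemma sum_Pt (ω : Ω) : ∑ k, Pt P W t k ω = 1 := by
  simpa using (cexp_comp_succ P (fun _ => 1) ω).symm.trans (cexp_const P (1 : ℝ) ω)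

end ConditionalExpectation

section Variance

variable {ι : Type*} [Fintype ι]

def weightedVariance (q z : ι → ℝ) : ℝ := ∑ k, q k * (z k - ∑ j, q j * z j) ^ 2

variable {q : ι → ℝ}

lemma weightedVariance_eq (hq1 : ∑ k, q k = 1) (z : ι → ℝ) :
    weightedVariance q z = ∑ k, q k * z k ^ 2 - (∑ k, q k * z k) ^ 2 := by
  have hexpand : ∀ k, q k * (z k - ∑ j, q j * z j) ^ 2
      = q k * z k ^ 2 - 2 * (∑ j, q j * z j) * (q k * z k) + (∑ j, q j * z j) ^ 2 * q k :=
    fun k => by ring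
  simp only [weightedVariance, hexpand, sum_add_distrib, sum_sub_distrib, ← mul_sum, hq1]
  ring

lemma weightedVariance_sub_const (hq1 : ∑ k, q k = 1) (z : ι → ℝ) (a : ℝ) :
    weightedVariance q (fun k => z k - a) = weightedVariance q z := by
  have hmean : ∑ j, q j * (z j - a) = ∑ j, q j * z j - a := by
    simp only [mul_sub, sum_sub_distrib, ← sum_mul, hq1, one_mul]
  simp only [weightedVariance, hmean, sub_sub_sub_cancel_right]

lemma neg_mul_mul_le_of_add_le_one {a b x y C : ℝ} (ha : 0 ≤ a) (hb : 0 ≤ b)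
    (hab : a + b ≤ 1) (hC : (1 - a) * a ≤ C) : -(a * x * (b * y)) ≤ C * (|x| * |y|) :=
  calc -(a * x * (b * y)) = a * b * -(x * y) := by ring
    _ ≤ a * b * (|x| * |y|) := by
        gcongr
        rw [← abs_mul]; exact neg_le_abs _
    _ ≤ (1 - a) * a * (|x| * |y|) := by
        rw [mul_comm (1 - a)]; gcongr; linarith
    _ ≤ C * (|x| * |y|) := by gcongr

lemma sum_mul_sq_sub_sq_sum_le (hq : ∀ k, 0 ≤ q k) (hq1 : ∑ k, q k ≤ 1) {C : ℝ}
    (hC : ∀ k, (1 - q k) * q k ≤ C) (y : ι → ℝ) :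
    ∑ k, q k * y k ^ 2 - (∑ k, q k * y k) ^ 2 ≤ Fintype.card ι * C * ∑ k, y k ^ 2 := by
  classical
  rcases isEmpty_or_nonempty ι with hι | ⟨⟨k₀⟩⟩
  · simp
  have hC0 : 0 ≤ C := by
    have : q k₀ ≤ 1 := (single_le_sum (fun k _ => hq k) (mem_univ k₀)).trans hq1
    exact (mul_nonneg (by linarith) (hq k₀)).trans (hC k₀)
  have hentry : ∀ j l, (if l = j then q j * y j ^ 2 else 0) - q j * y j * (q l * y l)
      ≤ C * (|y j| * |y l|) := by
    intro j l
    by_cases hlj : l = j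
    · subst hlj
      simp only [if_true, abs_mul_abs_self]
      nlinarith [mul_le_mul_of_nonneg_right (hC l) (sq_nonneg (y l))]
    · have hpair : q j + q l ≤ 1 := by
        rw [← sum_pair (Ne.symm hlj)]
        exact (sum_le_sum_of_subset_of_nonneg (subset_univ _) fun k _ _ => hq k).trans hq1
      rw [if_neg hlj, zero_sub]
      exact neg_mul_mul_le_of_add_le_one (hq j) (hq l) hpair (hC j)
  calc ∑ k, q k * y k ^ 2 - (∑ k, q k * y k) ^ 2
      = ∑ j, ∑ l, ((if l = j then q j * y j ^ 2 else 0) - q j * y j * (q l * y l)) := by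
        simp only [sum_sub_distrib, sum_ite_eq', mem_univ, if_true, sq (∑ k, q k * y k),
          sum_mul_sum]
    _ ≤ ∑ j, ∑ l, C * (|y j| * |y l|) :=
        sum_le_sum fun j _ => sum_le_sum fun l _ => hentry j l
    _ = C * (∑ k, |y k|) ^ 2 := by rw [sq, sum_mul_sum, mul_sum]; simp only [mul_sum]
    _ ≤ C * (Fintype.card ι * ∑ k, y k ^ 2) := by
        gcongr
        simpa only [sq_abs, card_univ] using sq_sum_le_card_mul_sum_sq (s := univ) (f := (|y ·|))
    _ = Fintype.card ι * C * ∑ k, y k ^ 2 := by ring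

end Variance

section LastCoordinate

variable {n : ℕ}

lemma mul_Itil_apply {K : ℕ} (A : Matrix (Fin K) (Fin (n + 1)) ℝ) (i : Fin K) (j : Fin n) :
    (A * Itil n) i j = A i j.castSucc - A i (Fin.last n) := by
  have hlast : Itil n (Fin.last n) j = -1 := by simp [Itil, j.isLt.ne']
  have hcast : ∀ k : Fin n, Itil n k.castSucc j = if k = j then 1 else 0 := fun k => by
    simp [Itil, Fin.val_inj, k.isLt.ne]
  simp [mul_apply, Fin.sum_univ_castSucc, hlast, hcast, sub_eq_add_neg]

lemma sum_sq_sub_last_le (hn : 0 < n) (z : Fin (n + 1) → ℝ) (m : ℝ) :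
    ∑ j : Fin n, (z j.castSucc - z (Fin.last n)) ^ 2 ≤ 2 * n * ∑ k, (z k - m) ^ 2 := by
  have hn1 : (1 : ℝ) ≤ n := by exact_mod_cast hn
  have hA : 0 ≤ ∑ j : Fin n, (z j.castSucc - m) ^ 2 := sum_nonneg fun j _ => sq_nonneg _
  calc ∑ j : Fin n, (z j.castSucc - z (Fin.last n)) ^ 2
      ≤ ∑ j : Fin n, (2 * (z j.castSucc - m) ^ 2 + 2 * (z (Fin.last n) - m) ^ 2) :=
        sum_le_sum fun j _ => by nlinarith [sq_nonneg (z j.castSucc + z (Fin.last n) - 2 * m)]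
    _ = 2 * ∑ j : Fin n, (z j.castSucc - m) ^ 2 + 2 * n * (z (Fin.last n) - m) ^ 2 := by
        simp only [sum_add_distrib, ← mul_sum, sum_const, card_univ, Fintype.card_fin,
          nsmul_eq_mul]
        ring
    _ ≤ 2 * n * (∑ j : Fin n, (z j.castSucc - m) ^ 2 + (z (Fin.last n) - m) ^ 2) := by
        nlinarith [sq_nonneg (z (Fin.last n) - m)]
    _ = 2 * n * ∑ k, (z k - m) ^ 2 := by rw [Fin.sum_univ_castSucc]

variable {q : Fin (n + 1) → ℝ}

lemma le_weightedVariance (hn : 0 < n) {c : ℝ} (hc0 : 0 ≤ c) (hc : ∀ k, c ≤ q k)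
    (z : Fin (n + 1) → ℝ) :
    1 / 2 * (n : ℝ)⁻¹ * c * ∑ j : Fin n, (z j.castSucc - z (Fin.last n)) ^ 2 ≤
      weightedVariance q z := by
  have hn' : (0 : ℝ) < n := by exact_mod_cast hn
  calc 1 / 2 * (n : ℝ)⁻¹ * c * ∑ j : Fin n, (z j.castSucc - z (Fin.last n)) ^ 2
      ≤ 1 / 2 * (n : ℝ)⁻¹ * c * (2 * n * ∑ k, (z k - ∑ j, q j * z j) ^ 2) := by
        gcongr; exact sum_sq_sub_last_le hn z _
    _ = ∑ k, c * (z k - ∑ j, q j * z j) ^ 2 := by field_simp; rw [mul_sum]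
    _ ≤ weightedVariance q z := sum_le_sum fun k _ => by gcongr; exact hc k

lemma weightedVariance_le (hq : ∀ k, 0 ≤ q k) (hq1 : ∑ k, q k = 1) {C : ℝ}
    (hC : ∀ j : Fin n, (1 - q j.castSucc) * q j.castSucc ≤ C) (z : Fin (n + 1) → ℝ) :
    weightedVariance q z ≤ n * C * ∑ j : Fin n, (z j.castSucc - z (Fin.last n)) ^ 2 := by
  have hq1' : ∑ j : Fin n, q j.castSucc ≤ 1 := by
    rw [← hq1, Fin.sum_univ_castSucc]; linarith [hq (Fin.last n)]
  rw [← weightedVariance_sub_const hq1 z (z (Fin.last n)), weightedVariance_eq hq1]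
  simpa [Fin.sum_univ_castSucc] using
    sum_mul_sq_sub_sq_sum_le (fun j : Fin n => hq j.castSucc) hq1' hC
      (fun j : Fin n => z j.castSucc - z (Fin.last n))

end LastCoordinate

lemma mulVec_single_one_sub {m ι : Type*} [Fintype ι] [DecidableEq ι] (A : Matrix m ι ℝ)
    (k : ι) (q : ι → ℝ) (i : m) :
    (A *ᵥ (Pi.single k 1 - q)) i = A i k - ∑ j, q j * A i j := by
  rw [mulVec_sub, Pi.sub_apply, mulVec_single]
  simp [mulVec, dotProduct, mul_comm]

section Martingale

variable {Ω : Type*} [Fintype Ω] (P : FinProb Ω) {N : ℕ} {W : ℕ → Ω → Fin N} {t : ℕ}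

lemma Mdiff_eq_single_sub (ω : Ω) :
    Mdiff P W t ω = Pi.single (W (t + 1) ω) 1 - fun k => Pt P W t k ω := by
  ext k
  simp [Mdiff, Pt, cexp_apply, wvec, Pi.single_apply, eq_comm]

lemma cexp_sum_sq_mulVec_Mdiff {K : ℕ} (Z : Ω → Matrix (Fin K) (Fin N) ℝ) (hZ : measF W t Z)
    (ω : Ω) :
    cexp P W t (fun ω' => ∑ i, (Z ω' *ᵥ Mdiff P W t ω') i ^ 2) ω =
      ∑ i, weightedVariance (fun k => Pt P W t k ω) (Z ω i) := by
  have hnext : ∀ ω', samePath W t ω ω' → ∑ i, (Z ω' *ᵥ Mdiff P W t ω') i ^ 2 =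
      ∑ i, (Z ω i (W (t + 1) ω') - ∑ j, Pt P W t j ω * Z ω i j) ^ 2 := fun ω' h => by
    have hPt : (fun k => Pt P W t k ω') = fun k => Pt P W t k ω :=
      funext fun k => (cexp_eq_of_samePath P _ h).symm
    simp only [← hZ ω ω' h, Mdiff_eq_single_sub, hPt, mulVec_single_one_sub]
  rw [cexp_congr P hnext, cexp_comp_succ P
    (fun k => ∑ i, (Z ω i k - ∑ j, Pt P W t j ω * Z ω i j) ^ 2)]
  simp only [weightedVariance, mul_sum]
  exact sum_comm

lemma sum_mul_sum_sq_mulVec_Mdiff {K : ℕ} (Z : Ω → Matrix (Fin K) (Fin N) ℝ)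
    (hZ : measF W t Z) :
    ∑ ω, P.p ω * ∑ i, (Z ω *ᵥ Mdiff P W t ω) i ^ 2 =
      ∑ ω, P.p ω * ∑ i, weightedVariance (fun k => Pt P W t k ω) (Z ω i) := by
  rw [← sum_mul_cexp P (W := W) (t := t)]
  simp only [cexp_sum_sq_mulVec_Mdiff P Z hZ]

end Martingale

lemma mul_sum_mul_sum {α ι : Type*} [Fintype α] [Fintype ι] (a : ℝ) (p : α → ℝ)
    (f : α → ι → ℝ) : a * ∑ x, p x * ∑ i, f x i = ∑ x, p x * ∑ i, a * f x i := by
  simp only [mul_sum, mul_left_comm a]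

theorem stmt4_general {Ω : Type*} [Fintype Ω] {n K : ℕ}
    (P : FinProb Ω) (W : ℕ → Ω → Fin (n + 1)) (T : ℕ)
    (s : Finset (ℕ × Fin n × Ω))
    (hs : s = (Finset.range T) ×ˢ (Finset.univ : Finset (Fin n × Ω)))
    (hne : s.Nonempty)
    (s2 : Finset (ℕ × Fin (n + 1) × Ω))
    (hs2 : s2 = (Finset.range T) ×ˢ (Finset.univ : Finset (Fin (n + 1) × Ω)))
    (hne2 : s2.Nonempty)
    (Lbar Lund : ℝ)
    (hLbar : Lbar = (n : ℝ) *
      s.sup' hne (fun x => (1 - Pt P W x.1 x.2.1.castSucc x.2.2) * Pt P W x.1 x.2.1.castSucc x.2.2))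
    (hLund : Lund = (1 / 2) * (n : ℝ)⁻¹ * s2.inf' hne2 (fun x => Pt P W x.1 x.2.1 x.2.2)) :
    ∀ t < T, ∀ Z : Ω → Matrix (Fin K) (Fin (n + 1)) ℝ, measF W t Z →
      Lund * (∑ ω, P.p ω * ∑ i, ∑ j, ((Z ω * Itil n) i j) ^ 2) ≤
          (∑ ω, P.p ω * ∑ i, ((Z ω).mulVec (Mdiff P W t ω) i) ^ 2) ∧
        (∑ ω, P.p ω * ∑ i, ((Z ω).mulVec (Mdiff P W t ω) i) ^ 2) ≤
          Lbar * (∑ ω, P.p ω * ∑ i, ∑ j, ((Z ω * Itil n) i j) ^ 2) := by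
  intro t ht Z hZ
  subst hLbar hLund
  set pmin := s2.inf' hne2 (fun x => Pt P W x.1 x.2.1 x.2.2)
  set vmax := s.sup' hne
    (fun x => (1 - Pt P W x.1 x.2.1.castSucc x.2.2) * Pt P W x.1 x.2.1.castSucc x.2.2)
  have hn : 0 < n := by obtain ⟨⟨-, j, -⟩, -⟩ := hne; exact j.pos
  have hmin0 : 0 ≤ pmin := le_inf' _ _ fun x _ => Pt_nonneg P x.2.1 x.2.2
  have hmin (k : Fin (n + 1)) (ω : Ω) : pmin ≤ Pt P W t k ω :=
    inf'_le _ (b := (t, k, ω)) (by simp [hs2, ht])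
  have hmax (j : Fin n) (ω : Ω) :
      (1 - Pt P W t j.castSucc ω) * Pt P W t j.castSucc ω ≤ vmax :=
    le_sup' (fun x : ℕ × Fin n × Ω => (1 - Pt P W x.1 x.2.1.castSucc x.2.2) *
      Pt P W x.1 x.2.1.castSucc x.2.2) (b := (t, j, ω)) (by simp [hs, ht])
  simp only [mul_Itil_apply, sum_mul_sum_sq_mulVec_Mdiff P Z hZ]
  rw [mul_sum_mul_sum, mul_sum_mul_sum]
  constructor <;> gcongr with ω _ i _
  · exact (P.pos ω).le
  · exact le_weightedVariance hn hmin0 (hmin · ω) (Z ω i)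
  · exact (P.pos ω).le
  · exact weightedVariance_le (Pt_nonneg P · ω) (sum_Pt P ω) (hmax · ω) (Z ω i)

/-- two-sided norm equivalence with the constants `L̄` and `L`. -/
theorem stmt4 {Ω : Type*} [Fintype Ω] [DecidableEq Ω] {n K : ℕ}
    (P : FinProb Ω) (W : ℕ → Ω → Fin (n + 1)) (T : ℕ)
    (hpos : ∀ t < T, ∀ k ω, 0 < Pt P W t k ω)
    (s : Finset (ℕ × Fin n × Ω))
    (hs : s = (Finset.range T) ×ˢ (Finset.univ : Finset (Fin n × Ω)))
    (hne : s.Nonempty)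
    (s2 : Finset (ℕ × Fin (n + 1) × Ω))
    (hs2 : s2 = (Finset.range T) ×ˢ (Finset.univ : Finset (Fin (n + 1) × Ω)))
    (hne2 : s2.Nonempty)
    (Lbar Lund : ℝ)
    (hLbar : Lbar = (n : ℝ) *
      s.sup' hne (fun x => (1 - Pt P W x.1 x.2.1.castSucc x.2.2) * Pt P W x.1 x.2.1.castSucc x.2.2))
    (hLund : Lund = (1 / 2) * (n : ℝ)⁻¹ * s2.inf' hne2 (fun x => Pt P W x.1 x.2.1 x.2.2)) :
    ∀ t < T, ∀ Z : Ω → Matrix (Fin K) (Fin (n + 1)) ℝ, measF W t Z →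
      Lund * (∑ ω, P.p ω * ∑ i, ∑ j, ((Z ω * Itil n) i j) ^ 2) ≤
          (∑ ω, P.p ω * ∑ i, ((Z ω).mulVec (Mdiff P W t ω) i) ^ 2) ∧
        (∑ ω, P.p ω * ∑ i, ((Z ω).mulVec (Mdiff P W t ω) i) ^ 2) ≤
          Lbar * (∑ ω, P.p ω * ∑ i, ∑ j, ((Z ω * Itil n) i j) ^ 2) :=
  stmt4_general P W T s hs hne s2 hs2 hne2 Lbar Lund hLbar hLund
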